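/- Lower bound for positive superharmonic functions on ℝⁿ: Let n ≥ 3 and let v : ℝⁿ → ℝ be a C² function with v(y) > 0 for all y and Δv(y) ≤ 0 for all y. Then there exists a constant c > 0 such that v(y) ≥ c (1 + |y|)^{2-n} for all y ∈ ℝⁿ. -/

import Mathlib

/-!
Let `m > 0` be the minimum of `v` on the closed unit ball and `c = m / 2`. The barrier
`φ(y) = |y|^(2-n) + |y|^(1-n)` equals `2` on the unit sphere, tends to `0` at infinity and is
strictly subharmonic off the origin: `|y|^(2-n)` is harmonic and `Δ |y|^(1-n) = (n-1) |y|^(-n-1)`.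
So `v - c φ` is strictly superharmonic on `ℝⁿ \ {0}` and has no local minimum there, because at a
local minimum all second directional derivatives, hence the Laplacian, are nonnegative. On an
annulus `1 ≤ |y| ≤ R` its minimum is therefore attained on the boundary, where it is `≥ 0` on the
inner sphere and `≥ -2c R^(2-n)` on the outer one. Letting `R → ∞` gives
`v ≥ c φ ≥ c (1 + |y|)^(2-n)` outside the unit ball, and inside it `v ≥ m ≥ c (1 + |y|)^(2-n)`.
-/

open Filter Set Metric Topology Asymptotics MeasureTheory Matrix
open scoped Classical ENNReal NNReal

noncomputable section

abbrev En (n : ℕ) := EuclideanSpace ℝ (Fin n)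
abbrev Matn (n : ℕ) := Matrix (Fin n) (Fin n) ℝ

/-- Frobenius norm of a matrix. -/
def frobNorm {n : ℕ} (M : Matn n) : ℝ :=
  Real.sqrt (∑ i, ∑ j, (M i j) ^ 2)

/-- The gradient of `φ` at `x`, as a vector in `ℝⁿ`. -/
def gradVec {n : ℕ} (φ : En n → ℝ) (x : En n) : En n :=
  WithLp.toLp 2 (fun i => fderiv ℝ φ x (EuclideanSpace.single i 1))

/-- The Hessian matrix of `φ` at `x`. -/
def hessMat {n : ℕ} (φ : En n → ℝ) (x : En n) : Matn n :=
  fun i j => fderiv ℝ (fun y => fderiv ℝ φ y (EuclideanSpace.single j 1)) x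
    (EuclideanSpace.single i 1)

/-- `g ∈ C^{1,1}_loc(Ω)`: differentiable with locally Lipschitz gradient. -/
def C11LocOn {n : ℕ} (Ω : Set (En n)) (g : En n → ℝ) : Prop :=
  (∀ x ∈ Ω, DifferentiableAt ℝ g x) ∧
  ∀ x ∈ Ω, ∃ ε > 0, ∃ K : ℝ≥0, LipschitzOnWith K (fun y => fderiv ℝ g y) (ball x ε ∩ Ω)

/-- `g ∈ C^{1,1}(S)`: differentiable with Lipschitz gradient on `S`. -/
def C11On {n : ℕ} (S : Set (En n)) (g : En n → ℝ) : Prop :=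
  DifferentiableOn ℝ g S ∧ ∃ K : ℝ≥0, LipschitzOnWith K (fun y => fderivWithin ℝ g S y) S

/-- `ψ` is punctually second order differentiable at `x` with jet `(ψ x, p, M)`. -/
def HasJet2At {n : ℕ} (ψ : En n → ℝ) (x : En n) (p : En n) (M : Matn n) : Prop :=
  M.IsSymm ∧
  (fun z : En n => ψ (x + z) - ψ x - (∑ i, p i * z i) - (1 / 2) * ∑ i, ∑ j, M i j * z i * z j)
    =o[𝓝 0] fun z : En n => ‖z‖ ^ 2

/-- The slice `𝒰ₓ`. -/
def Uslice {n : ℕ} (𝒰 : Set (En n × ℝ × En n × Matn n)) (x : En n) :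
    Set (ℝ × En n × Matn n) :=
  {t | (x, t.1, t.2.1, t.2.2) ∈ 𝒰}

/-- `𝒰` is a nonempty (relatively) open subset of `Ω̄ × ℝ × ℝⁿ × Symₙ`. -/
def UAdmissible {n : ℕ} (Ω : Set (En n)) (𝒰 : Set (En n × ℝ × En n × Matn n)) : Prop :=
  𝒰.Nonempty ∧ (∀ q ∈ 𝒰, q.1 ∈ closure Ω ∧ (q.2.2.2).IsSymm) ∧
  ∃ V : Set (En n × ℝ × En n × Matn n), IsOpen V ∧
    𝒰 = V ∩ {q | q.1 ∈ closure Ω ∧ (q.2.2.2).IsSymm}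

/-- Condition (i): `(F,𝒰)` is elliptic. -/
def EllipticU {n : ℕ} (𝒰 : Set (En n × ℝ × En n × Matn n))
    (F : En n × ℝ × En n × Matn n → ℝ) : Prop :=
  ∀ x s (p : En n) (M : Matn n), (x, s, p, M) ∈ 𝒰 → ∀ N : Matn n, N.PosSemidef →
    (x, s, p, M + N) ∈ 𝒰 ∧ F (x, s, p, M) ≤ F (x, s, p, M + N)

/-- Condition (ii): `F < 1` on `∂𝒰ₓ` for all `x ∈ Ω̄`. -/
def SuplevelStrict {n : ℕ} (Ω : Set (En n)) (𝒰 : Set (En n × ℝ × En n × Matn n))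
    (F : En n × ℝ × En n × Matn n → ℝ) : Prop :=
  ∀ x ∈ closure Ω, ∀ t ∈ closure (Uslice 𝒰 x), t ∉ Uslice 𝒰 x →
    F (x, t.1, t.2.1, t.2.2) < 1

/-- Condition (ii'): `F ≤ 1` on `∂𝒰ₓ` for all `x ∈ Ω̄`. -/
def SuplevelWeak {n : ℕ} (Ω : Set (En n)) (𝒰 : Set (En n × ℝ × En n × Matn n))
    (F : En n × ℝ × En n × Matn n → ℝ) : Prop :=
  ∀ x ∈ closure Ω, ∀ t ∈ closure (Uslice 𝒰 x), t ∉ Uslice 𝒰 x →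
    F (x, t.1, t.2.1, t.2.2) ≤ 1

/-- Condition (iii): local strict ellipticity. -/
def LocStrictEllU {n : ℕ} (𝒰 : Set (En n × ℝ × En n × Matn n))
    (F : En n × ℝ × En n × Matn n → ℝ) : Prop :=
  ∀ 𝒦 : Set (En n × ℝ × En n × Matn n), 𝒦 ⊆ 𝒰 → IsCompact 𝒦 →
    ∃ δ > 0, ∀ x s (p : En n) (M : Matn n), (x, s, p, M) ∈ 𝒦 → ∀ N : Matn n, N.PosSemidef →
      δ * frobNorm N ≤ F (x, s, p, M + N) - F (x, s, p, M)

/-- Condition (iv): local Lipschitz continuity in `(s,p,M)`. -/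
def LocLipU {n : ℕ} (𝒰 : Set (En n × ℝ × En n × Matn n))
    (F : En n × ℝ × En n × Matn n → ℝ) : Prop :=
  ∀ 𝒦 : Set (En n × ℝ × En n × Matn n), 𝒦 ⊆ 𝒰 → IsCompact 𝒦 →
    ∃ C > 0, ∀ x s (p : En n) (M : Matn n) s' (p' : En n) (M' : Matn n),
      (x, s, p, M) ∈ 𝒦 → (x, s', p', M') ∈ 𝒦 →
      |F (x, s, p, M) - F (x, s', p', M')| ≤ C * (|s - s'| + ‖p - p'‖ + frobNorm (M - M'))

/-- `F(x, J₂[ψ]) ≥ c` in `Ω` in the viscosity sense. -/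
def ViscGe {n : ℕ} (Ω : Set (En n)) (𝒰 : Set (En n × ℝ × En n × Matn n))
    (F : En n × ℝ × En n × Matn n → ℝ) (c : ℝ) (ψ : En n → EReal) : Prop :=
  ∀ x₀ ∈ Ω, ∀ φ : En n → ℝ, ContDiffOn ℝ 2 φ Ω → ψ x₀ = (φ x₀ : EReal) →
    (∀ᶠ x in 𝓝[Ω] x₀, ψ x ≤ (φ x : EReal)) →
    (x₀, φ x₀, gradVec φ x₀, hessMat φ x₀) ∈ closure 𝒰 ∧
      c ≤ F (x₀, φ x₀, gradVec φ x₀, hessMat φ x₀)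

/-- `F(x, J₂[ψ]) ≤ c` in `Ω` in the viscosity sense. -/
def ViscLe {n : ℕ} (Ω : Set (En n)) (𝒰 : Set (En n × ℝ × En n × Matn n))
    (F : En n × ℝ × En n × Matn n → ℝ) (c : ℝ) (ψ : En n → EReal) : Prop :=
  ∀ x₀ ∈ Ω, ∀ φ : En n → ℝ, ContDiffOn ℝ 2 φ Ω → ψ x₀ = (φ x₀ : EReal) →
    (∀ᶠ x in 𝓝[Ω] x₀, (φ x : EReal) ≤ ψ x) →
    ((x₀, φ x₀, gradVec φ x₀, hessMat φ x₀) ∉ closure 𝒰 ∨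
      F (x₀, φ x₀, gradVec φ x₀, hessMat φ x₀) ≤ c)

/-- The eigenvalues of a (symmetric) matrix, listed with multiplicity in
nondecreasing order; junk value `0` if the matrix is not symmetric. -/
def eigs {n : ℕ} (M : Matn n) : En n :=
  if h : M.IsHermitian then WithLp.toLp 2 (fun i => h.eigenvalues (Tuple.sort h.eigenvalues i)) else 0

/-- The conformal Hessian `A^u`. -/
def confHess {n : ℕ} (u : En n → ℝ) (x : En n) : Matn n :=
  fun i j =>
    -(2 / ((n : ℝ) - 2)) * (u x) ^ (-((n : ℝ) + 2) / ((n : ℝ) - 2)) * hessMat u x i j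
    + (2 * (n : ℝ) / ((n : ℝ) - 2) ^ 2) * (u x) ^ (-(2 * (n : ℝ)) / ((n : ℝ) - 2)) *
        (gradVec u x i * gradVec u x j)
    - (2 / ((n : ℝ) - 2) ^ 2) * (u x) ^ (-(2 * (n : ℝ)) / ((n : ℝ) - 2)) *
        (∑ k, (gradVec u x k) ^ 2) * (if i = j then (1 : ℝ) else 0)

/-- Condition (1): `(f,Γ)` is symmetric. -/
def SymmCond {n : ℕ} (Γ : Set (En n)) (f : En n → ℝ) : Prop :=
  ∀ l ∈ Γ, ∀ σ : Equiv.Perm (Fin n),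
    (WithLp.toLp 2 (fun i => l (σ i)) : En n) ∈ Γ ∧ f (WithLp.toLp 2 (fun i => l (σ i))) = f l

/-- Condition (2): `(f,Γ)` is elliptic. -/
def EllCond {n : ℕ} (Γ : Set (En n)) (f : En n → ℝ) : Prop :=
  ∀ l ∈ Γ, ∀ μ : En n, (∀ i, 0 ≤ μ i) → l + μ ∈ Γ ∧ f l ≤ f (l + μ)

/-- Condition (3): local strict ellipticity. -/
def StrictEllCond {n : ℕ} (Γ : Set (En n)) (f : En n → ℝ) : Prop :=
  ∀ K : Set (En n), K ⊆ Γ → IsCompact K →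
    ∃ δ > 0, ∀ l ∈ K, ∀ μ : En n, (∀ i, 0 ≤ μ i) → δ * ‖μ‖ ≤ f (l + μ) - f l

/-- Condition (4): local Lipschitz continuity. -/
def LipCond {n : ℕ} (Γ : Set (En n)) (f : En n → ℝ) : Prop :=
  ∀ K : Set (En n), K ⊆ Γ → IsCompact K →
    ∃ C > 0, ∀ l ∈ K, ∀ l' ∈ K, |f l - f l'| ≤ C * ‖l - l'‖

/-- Condition (5): the `1`-superlevel set of `f` stays in `Γ`. -/
def LevelCond {n : ℕ} (Γ : Set (En n)) (f : En n → ℝ) : Prop :=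
  {l ∈ closure Γ | 1 ≤ f l} ⊆ Γ

/-- Condition (6): `Γ ⊆ Γ₁`. -/
def TraceCond {n : ℕ} (Γ : Set (En n)) : Prop :=
  ∀ l ∈ Γ, 0 < ∑ i, l i

/-- `u` is a viscosity subsolution of `f(λ(A^u)) = 1` in `Ω`. -/
def ConfViscSub {n : ℕ} (Ω : Set (En n)) (Γ : Set (En n)) (f : En n → ℝ)
    (u : En n → ℝ) : Prop :=
  ∀ x₀ ∈ Ω, ∀ φ : En n → ℝ, ContDiffOn ℝ 2 φ Ω → (∀ x ∈ Ω, 0 < φ x) →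
    φ x₀ = u x₀ → (∀ᶠ x in 𝓝[Ω] x₀, φ x ≤ u x) →
    eigs (confHess φ x₀) ∈ closure Γ ∧ 1 ≤ f (eigs (confHess φ x₀))

/-- `u` is a viscosity supersolution of `f(λ(A^u)) = 1` in `Ω`. -/
def ConfViscSup {n : ℕ} (Ω : Set (En n)) (Γ : Set (En n)) (f : En n → ℝ)
    (u : En n → EReal) : Prop :=
  ∀ x₀ ∈ Ω, ∀ φ : En n → ℝ, ContDiffOn ℝ 2 φ Ω → (∀ x ∈ Ω, 0 < φ x) →
    (φ x₀ : EReal) = u x₀ → (∀ᶠ x in 𝓝[Ω] x₀, u x ≤ (φ x : EReal)) →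
    (eigs (confHess φ x₀) ∉ closure Γ ∨ f (eigs (confHess φ x₀)) ≤ 1)

/-- The Kelvin-type transform `w_{x,λ}`. -/
def kelvin {n : ℕ} (w : En n → ℝ) (x : En n) (l : ℝ) (y : En n) : ℝ :=
  (l ^ (n - 2) / ‖y - x‖ ^ (n - 2)) * w (x + (l ^ 2 / ‖y - x‖ ^ 2) • (y - x))

open InnerProductSpace Laplacian Module
open scoped RealInnerProductSpace

theorem IsLocalMin.nonneg_of_hasDerivAt_deriv {g g' : ℝ → ℝ} {t₀ a : ℝ}
    (hmin : IsLocalMin g t₀) (hg : ∀ᶠ t in 𝓝 t₀, HasDerivAt g (g' t) t)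
    (hg' : HasDerivAt g' a t₀) : 0 ≤ a := by
  -- If `a < 0`, then `g' < 0` just right of `t₀`, and the mean value theorem pushes `g` below `g t₀`.
  by_contra! ha
  have hg'₀ : g' t₀ = 0 := hmin.hasDerivAt_eq_zero hg.self_of_nhds
  have hneg : ∀ᶠ t in 𝓝[>] t₀, g' t < 0 := by
    have := (hasDerivAt_iff_tendsto_slope.mp hg').eventually_lt_const ha
    filter_upwards [nhdsWithin_mono _ (fun t ht => ne_of_gt ht) this, self_mem_nhdsWithin]
      with t hslope ht
    rw [slope_def_field, hg'₀, sub_zero] at hslope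
    exact ((div_neg_iff.mp hslope).resolve_left fun h => h.2.not_gt (sub_pos.mpr ht)).1
  obtain ⟨u, hu : t₀ < u, hIoo⟩ := mem_nhdsGT_iff_exists_Ioo_subset.mp
    (hneg.and (nhdsWithin_le_nhds (hg.and hmin)))
  set t₁ := (t₀ + u) / 2 with ht₁_def
  have ht₁ : t₁ ∈ Ioo t₀ u := ⟨by linarith, by linarith⟩
  have hderiv : ∀ t ∈ Ioc t₀ t₁, HasDerivAt g (g' t) t :=
    fun t ht => (hIoo ⟨ht.1, ht.2.trans_lt ht₁.2⟩).2.1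
  obtain ⟨ξ, hξ, hslope⟩ := exists_hasDerivAt_eq_slope g g' ht₁.1
    (fun t ht => by
      rcases ht.1.eq_or_lt with rfl | ht₀
      · exact hg.self_of_nhds.continuousAt.continuousWithinAt
      · exact (hderiv t ⟨ht₀, ht.2⟩).continuousAt.continuousWithinAt)
    (fun t ht => hderiv t (Ioo_subset_Ioc_self ht))
  have hξneg : g' ξ < 0 := (hIoo ⟨hξ.1, hξ.2.trans ht₁.2⟩).1
  rw [hslope, div_neg_iff] at hξneg
  exact hξneg.elim (fun h => h.2.not_gt (sub_pos.mpr ht₁.1))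
    fun h => h.1.not_ge (sub_nonneg.mpr (hIoo ht₁).2.2)

section SecondDerivative

variable {F : Type*} [NormedAddCommGroup F] [NormedSpace ℝ F] {f : F → ℝ} {x : F}

theorem ContDiffAt.iteratedFDeriv_two_apply (hf : ContDiffAt ℝ 2 f x) (e e' : F) :
    iteratedFDeriv ℝ 2 f x ![e, e'] = fderiv ℝ (fun y => fderiv ℝ f y e') x e := by
  rw [_root_.iteratedFDeriv_two_apply, fderiv_clm_apply
    ((hf.fderiv_right (m := 1) le_rfl).differentiableAt one_ne_zero) (differentiableAt_const _)]
  simp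

theorem IsLocalMin.iteratedFDeriv_two_nonneg (hmin : IsLocalMin f x)
    (hf : ContDiffAt ℝ 2 f x) (e : F) : 0 ≤ iteratedFDeriv ℝ 2 f x ![e, e] := by
  have hℓ : ∀ t : ℝ, HasDerivAt (fun t : ℝ => x + t • e) e t := fun t => by
    simpa using ((hasDerivAt_id t).smul_const e).const_add x
  have hℓx : Tendsto (fun t : ℝ => x + t • e) (𝓝 0) (𝓝 x) := by
    simpa using (hℓ 0).continuousAt.tendsto
  have hfirst : ∀ᶠ t in 𝓝 (0 : ℝ),
      HasDerivAt (fun t => f (x + t • e)) (fderiv ℝ f (x + t • e) e) t := by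
    filter_upwards [hℓx.eventually (hf.eventually (by simp))] with t ht
    exact (ht.differentiableAt (by simp)).hasFDerivAt.comp_hasDerivAt t (hℓ t)
  have hsecond : HasDerivAt (fun t : ℝ => fderiv ℝ f (x + t • e) e)
      (fderiv ℝ (fderiv ℝ f) x e e) 0 := by
    have h := (hf.fderiv_right (m := 1) le_rfl).differentiableAt one_ne_zero
    convert (h.hasFDerivAt.clm_apply (hasFDerivAt_const e x)).comp_hasDerivAt_of_eq
      0 (hℓ 0) (by simp) using 1
    all_goals first | rfl | simp
  have hmin' : IsLocalMin f (x + (0 : ℝ) • e) := by simpa using hmin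
  rw [_root_.iteratedFDeriv_two_apply]
  exact (hmin'.comp_continuous (g := fun t : ℝ => x + t • e) (hℓ 0).continuousAt)
    |>.nonneg_of_hasDerivAt_deriv hfirst hsecond

end SecondDerivative

theorem IsCompact.exists_mem_frontier_isMinOn {X α : Type*} [TopologicalSpace X]
    [LinearOrder α] [TopologicalSpace α] [ClosedIicTopology α] {K : Set X} {w : X → α}
    (hK : IsCompact K) (hne : K.Nonempty) (hw : ContinuousOn w K)
    (hmin : ∀ z ∈ interior K, ¬IsLocalMin w z) : ∃ z ∈ frontier K, IsMinOn w K z := by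
  obtain ⟨z, hzK, hz⟩ := hK.exists_isMinOn hne hw
  refine ⟨z, ⟨subset_closure hzK, fun hint => hmin z hint ?_⟩, hz⟩
  exact hz.isLocalMin (mem_interior_iff_mem_nhds.mp hint)

theorem nonneg_of_forall_not_isLocalMin_of_norm_ge_one {E : Type*} [NormedAddCommGroup E]
    [ProperSpace E] {w : E → ℝ} (hw : ContinuousOn w {y | 1 ≤ ‖y‖})
    (hmin : ∀ z, 1 ≤ ‖z‖ → ¬IsLocalMin w z) (hsphere : ∀ z, ‖z‖ = 1 → 0 ≤ w z)
    (hinf : ∀ ε > 0, ∃ R, ∀ z, R ≤ ‖z‖ → -ε ≤ w z) {y : E} (hy : 1 ≤ ‖y‖) : 0 ≤ w y := by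
  refine le_of_forall_pos_le_add fun ε hε => ?_
  obtain ⟨R₀, hR₀⟩ := hinf ε hε
  set R := max R₀ ‖y‖
  set K : Set E := norm ⁻¹' Icc (1 : ℝ) R
  have hK : IsCompact K := (isCompact_closedBall (0 : E) R).of_isClosed_subset
    (isClosed_Icc.preimage continuous_norm) fun z hz => by simpa using hz.2
  have hKint : (norm : E → ℝ) ⁻¹' Ioo (1 : ℝ) R ⊆ interior K :=
    (isOpen_Ioo.preimage continuous_norm).subset_interior_iff.mpr
      (preimage_mono Ioo_subset_Icc_self)
  obtain ⟨z, hzfr, hzmin⟩ := hK.exists_mem_frontier_isMinOn ⟨y, hy, le_max_right _ _⟩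
    (hw.mono fun z hz => hz.1) fun z hz => hmin z (interior_subset hz).1
  have hzK : z ∈ K := hK.isClosed.frontier_subset hzfr
  have hz : ‖z‖ = 1 ∨ ‖z‖ = R := by
    by_contra! h
    exact hzfr.2 (hKint ⟨lt_of_le_of_ne hzK.1 h.1.symm, lt_of_le_of_ne hzK.2 h.2⟩)
  calc 0 ≤ w z + ε := by
        rcases hz with h | h
        · linarith [hsphere z h]
        · linarith [hR₀ z (h ▸ le_max_left _ _)]
    _ ≤ w y + ε := add_le_add_left (hzmin ⟨hy, le_max_right _ _⟩) ε

section Laplacian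

variable {E : Type*} [NormedAddCommGroup E] [InnerProductSpace ℝ E]

theorem IsLocalMin.laplacian_nonneg [FiniteDimensional ℝ E] {f : E → ℝ} {x : E}
    (hmin : IsLocalMin f x) (hf : ContDiffAt ℝ 2 f x) : 0 ≤ Δ f x := by
  rw [laplacian_eq_iteratedFDeriv_stdOrthonormalBasis]
  exact Finset.sum_nonneg fun i _ => hmin.iteratedFDeriv_two_nonneg hf _

theorem hasFDerivAt_norm_rpow_of_ne_zero {x : E} (hx : x ≠ 0) (p : ℝ) :
    HasFDerivAt (fun y : E => ‖y‖ ^ p) ((p * ‖x‖ ^ (p - 2)) • innerSL ℝ x) x := by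
  convert (hasStrictFDerivAt_norm_sq x).hasFDerivAt.rpow_const (p := p / 2) (by simp [hx])
    using 1
  · ext y; rw [← Real.rpow_natCast_mul (norm_nonneg _)]; ring_nf
  · rw [← Real.rpow_natCast_mul (norm_nonneg _), ← Nat.cast_smul_eq_nsmul ℝ, smul_smul]
    ring_nf

theorem contDiffAt_norm_rpow_of_ne_zero {x : E} (hx : x ≠ 0) (p : ℝ) {k : WithTop ℕ∞} :
    ContDiffAt ℝ k (fun y : E => ‖y‖ ^ p) x :=
  (contDiffAt_norm ℝ hx).rpow_const_of_ne (norm_ne_zero_iff.mpr hx)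

theorem fderiv_fderiv_norm_rpow_apply {x : E} (hx : x ≠ 0) (p : ℝ) (e : E) :
    fderiv ℝ (fun y => fderiv ℝ (fun y : E => ‖y‖ ^ p) y e) x e
      = p * ‖x‖ ^ (p - 2) * ‖e‖ ^ 2 + p * (p - 2) * ‖x‖ ^ (p - 4) * ⟪x, e⟫ ^ 2 := by
  have hfirst : (fun y => fderiv ℝ (fun y : E => ‖y‖ ^ p) y e) =ᶠ[𝓝 x]
      fun y => p * ‖y‖ ^ (p - 2) * ⟪e, y⟫ := by
    filter_upwards [eventually_ne_nhds hx] with y hy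
    rw [(hasFDerivAt_norm_rpow_of_ne_zero hy p).fderiv]
    simp [real_inner_comm]
  have hsecond := (((hasFDerivAt_norm_rpow_of_ne_zero hx (p - 2)).const_mul p).mul
    (innerSL ℝ e).hasFDerivAt).congr_of_eventuallyEq hfirst
  rw [hsecond.fderiv]
  simp only [_root_.add_apply, _root_.smul_apply, innerSL_apply_apply, smul_eq_mul,
    real_inner_self_eq_norm_sq, real_inner_comm x e]
  ring_nf

theorem laplacian_norm_rpow [FiniteDimensional ℝ E] {x : E} (hx : x ≠ 0) (p : ℝ) :
    Δ (fun y : E => ‖y‖ ^ p) x = p * (p + finrank ℝ E - 2) * ‖x‖ ^ (p - 2) := by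
  set b := stdOrthonormalBasis ℝ E
  have hpow : ‖x‖ ^ (p - 4) * ‖x‖ ^ 2 = ‖x‖ ^ (p - 2) := by
    rw [← Real.rpow_natCast, ← Real.rpow_add (norm_pos_iff.mpr hx)]; ring_nf
  have hcoord : ∑ i, ⟪x, b i⟫ ^ 2 = ‖x‖ ^ 2 := by
    simpa [sq, real_inner_comm, real_inner_self_eq_norm_sq] using b.sum_inner_mul_inner x x
  rw [laplacian_eq_iteratedFDeriv_orthonormalBasis _ b]
  simp only [(contDiffAt_norm_rpow_of_ne_zero hx p).iteratedFDeriv_two_apply,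
    fderiv_fderiv_norm_rpow_apply hx, b.orthonormal.1, Finset.sum_add_distrib, ← Finset.mul_sum,
    hcoord, one_pow, Finset.sum_const, Finset.card_univ, Fintype.card_fin, nsmul_eq_mul,
    mul_one, mul_assoc, hpow]
  ring

def radialBarrier (E : Type*) [NormedAddCommGroup E] [InnerProductSpace ℝ E] (y : E) : ℝ :=
  ‖y‖ ^ (2 - finrank ℝ E : ℝ) + ‖y‖ ^ (1 - finrank ℝ E : ℝ)

theorem contDiffAt_radialBarrier {x : E} (hx : x ≠ 0) {k : WithTop ℕ∞} :
    ContDiffAt ℝ k (radialBarrier E) x :=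
  (contDiffAt_norm_rpow_of_ne_zero hx _).add (contDiffAt_norm_rpow_of_ne_zero hx _)

theorem laplacian_radialBarrier_pos [FiniteDimensional ℝ E] (hd : 2 ≤ finrank ℝ E) {x : E}
    (hx : x ≠ 0) : 0 < Δ (radialBarrier E) x := by
  have hd' : (2 : ℝ) ≤ finrank ℝ E := by exact_mod_cast hd
  have hpos : 0 < ‖x‖ ^ ((1 - finrank ℝ E : ℝ) - 2) := Real.rpow_pos_of_pos (norm_pos_iff.mpr hx) _
  change 0 < Δ ((fun y : E => ‖y‖ ^ (2 - finrank ℝ E : ℝ))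
    + fun y : E => ‖y‖ ^ (1 - finrank ℝ E : ℝ)) x
  rw [(contDiffAt_norm_rpow_of_ne_zero hx _).laplacian_add (contDiffAt_norm_rpow_of_ne_zero hx _),
    laplacian_norm_rpow hx, laplacian_norm_rpow hx]
  nlinarith

theorem exists_forall_radialBarrier_le (hd : 3 ≤ finrank ℝ E) {ε : ℝ} (hε : 0 < ε) :
    ∃ R, ∀ y : E, R ≤ ‖y‖ → radialBarrier E y ≤ ε := by
  have hd' : (3 : ℝ) ≤ finrank ℝ E := by exact_mod_cast hd
  have hlim : Tendsto (fun r : ℝ => r ^ (2 - finrank ℝ E : ℝ) + r ^ (1 - finrank ℝ E : ℝ))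
      atTop (𝓝 0) := by
    simpa [neg_sub] using (tendsto_rpow_neg_atTop (by linarith : (0 : ℝ) < finrank ℝ E - 2)).add
      (tendsto_rpow_neg_atTop (by linarith : (0 : ℝ) < finrank ℝ E - 1))
  obtain ⟨R, hR⟩ := eventually_atTop.mp (hlim.eventually (ge_mem_nhds hε))
  exact ⟨R, fun y hy => hR ‖y‖ hy⟩

theorem not_isLocalMin_sub_smul_radialBarrier [FiniteDimensional ℝ E] (hd : 2 ≤ finrank ℝ E)
    {v : E → ℝ} {x : E} (hv : ContDiffAt ℝ 2 v x) (hΔ : Δ v x ≤ 0) {c : ℝ} (hc : 0 < c)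
    (hx : x ≠ 0) : ¬IsLocalMin (v - c • radialBarrier E) x := by
  intro hmin
  have hφ : ContDiffAt ℝ 2 (radialBarrier E) x := contDiffAt_radialBarrier hx
  have hcφ : ContDiffAt ℝ 2 (c • radialBarrier E) x := hφ.const_smul c
  have := hmin.laplacian_nonneg (hv.sub hcφ)
  rw [hv.laplacian_sub hcφ, laplacian_smul c hφ, smul_eq_mul] at this
  nlinarith [laplacian_radialBarrier_pos hd hx]

theorem mul_radialBarrier_le_of_laplacian_nonpos [FiniteDimensional ℝ E] (hd : 3 ≤ finrank ℝ E)
    {v : E → ℝ} (hv : ContDiff ℝ 2 v) (hnonneg : ∀ y, 0 ≤ v y) (hΔ : ∀ y, Δ v y ≤ 0)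
    {c : ℝ} (hc : 0 < c)
    (hsphere : ∀ y : E, ‖y‖ = 1 → c * radialBarrier E y ≤ v y) {y : E} (hy : 1 ≤ ‖y‖) :
    c * radialBarrier E y ≤ v y := by
  have hne : ∀ z : E, 1 ≤ ‖z‖ → z ≠ 0 := fun z hz h => by simp [h] at hz; linarith
  refine sub_nonneg.mp <| nonneg_of_forall_not_isLocalMin_of_norm_ge_one
    (w := v - c • radialBarrier E) (fun z hz => ?_) (fun z hz => ?_)
    (fun z hz => sub_nonneg.mpr (hsphere z hz)) (fun ε hε => ?_) hy
  · exact (hv.contDiffAt.sub ((contDiffAt_radialBarrier (hne z hz)).const_smul c))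
      |>.continuousAt.continuousWithinAt
  · exact not_isLocalMin_sub_smul_radialBarrier (by omega) hv.contDiffAt (hΔ z) hc (hne z hz)
  · obtain ⟨R, hR⟩ := exists_forall_radialBarrier_le hd (div_pos hε hc)
    refine ⟨R, fun z hz => ?_⟩
    have := (le_div_iff₀' hc).mp (hR z hz)
    show -ε ≤ v z - c * radialBarrier E z
    linarith [hnonneg z]

theorem exists_mul_one_add_norm_rpow_le_of_laplacian_nonpos [FiniteDimensional ℝ E]
    (hd : 3 ≤ finrank ℝ E) {v : E → ℝ} (hv : ContDiff ℝ 2 v) (hpos : ∀ y, 0 < v y)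
    (hΔ : ∀ y, Δ v y ≤ 0) :
    ∃ c > 0, ∀ y : E, c * (1 + ‖y‖) ^ ((2 : ℝ) - finrank ℝ E) ≤ v y := by
  have hd' : (3 : ℝ) ≤ finrank ℝ E := by exact_mod_cast hd
  obtain ⟨x₀, -, hx₀⟩ := (isCompact_closedBall (0 : E) 1).exists_isMinOn
    ⟨0, mem_closedBall_self zero_le_one⟩ hv.continuous.continuousOn
  have hmin : ∀ y : E, ‖y‖ ≤ 1 → v x₀ ≤ v y := fun y hy => hx₀ (mem_closedBall_zero_iff.mpr hy)
  set c := v x₀ / 2 with hc_def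
  have hc : 0 < c := half_pos (hpos x₀)
  refine ⟨c, hc, fun y => ?_⟩
  rcases le_total ‖y‖ 1 with hy | hy
  · calc c * (1 + ‖y‖) ^ ((2 : ℝ) - finrank ℝ E) ≤ c * 1 := by
          gcongr; exact Real.rpow_le_one_of_one_le_of_nonpos (by simp) (by linarith)
      _ ≤ v y := by linarith [hmin y hy]
  · have hbarrier := mul_radialBarrier_le_of_laplacian_nonpos hd hv (fun y => (hpos y).le) hΔ hc
      (fun z hz => by simp only [radialBarrier, hz, Real.one_rpow]; linarith [hmin z hz.le]) hy
    calc c * (1 + ‖y‖) ^ ((2 : ℝ) - finrank ℝ E) ≤ c * ‖y‖ ^ ((2 : ℝ) - finrank ℝ E) := by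
          refine mul_le_mul_of_nonneg_left ?_ hc.le
          exact Real.rpow_le_rpow_of_nonpos (by linarith) (by linarith) (by linarith)
      _ ≤ c * radialBarrier E y := by
          gcongr; exact le_add_of_nonneg_right (Real.rpow_nonneg (norm_nonneg y) _)
      _ ≤ v y := hbarrier

end Laplacian

theorem laplacian_eq_sum_hessMat {n : ℕ} {v : En n → ℝ} {y : En n} (hv : ContDiffAt ℝ 2 v y) :
    Δ v y = ∑ i, hessMat v y i i := by
  rw [laplacian_eq_iteratedFDeriv_orthonormalBasis v (EuclideanSpace.basisFun (Fin n) ℝ)]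
  simp only [EuclideanSpace.basisFun_apply, hv.iteratedFDeriv_two_apply, hessMat]

/-- Lower bound for positive superharmonic `C²` functions on `ℝⁿ`, `n ≥ 3`. -/
theorem positive_superharmonic_lower_bound {n : ℕ} (hn : 3 ≤ n)
    (v : En n → ℝ) (hv : ContDiff ℝ 2 v)
    (hvpos : ∀ y, 0 < v y)
    (hsuper : ∀ y, ∑ i, hessMat v y i i ≤ 0) :
    ∃ c > 0, ∀ y : En n, c * (1 + ‖y‖) ^ ((2 : ℝ) - n) ≤ v y := by
  have hdim : finrank ℝ (En n) = n := finrank_euclideanSpace_fin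
  simpa [hdim] using exists_mul_one_add_norm_rpow_le_of_laplacian_nonpos (by rwa [hdim]) hv hvpos
    fun y => (laplacian_eq_sum_hessMat hv.contDiffAt).trans_le (hsuper y)
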